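/- arXiv:2107.11969 — 2 statements merged into one kernel-verified Lean document; each statement's English description precedes it below -/
import Mathlib

section
/- For Re(μ) > 0 and every natural number n, ∫_0^1 x^{μ−1} P_n(2x−1) dx = Γ(μ)² / ( Γ(μ+n+1) Γ(μ−n) ). -/
open Complex Real

noncomputable def hyp2F1 (a b c z : ℂ) : ℂ :=
  ∑' n : ℕ, (ascPochhammer ℂ n).eval a * (ascPochhammer ℂ n).eval b /
    ((ascPochhammer ℂ n).eval c * (n.factorial : ℂ)) * z ^ n

/-- Legendre function of complex degree ν, for real argument in [-1,1]. -/
noncomputable def legendreFn (ν : ℂ) (x : ℝ) : ℂ :=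
  hyp2F1 (-ν) (ν + 1) 1 ((1 - (x : ℂ)) / 2)

/-- Legendre polynomial of degree n. -/
noncomputable def legendreP (n : ℕ) (x : ℝ) : ℝ :=
  ∑ k ∈ Finset.range (n + 1),
    (n.choose k : ℝ) * ((n + k).choose k : ℝ) * ((x - 1) / 2) ^ k

/-- Complete elliptic integral of the first kind, elliptic-modulus convention. -/
noncomputable def ellipticK (x : ℝ) : ℝ :=
  ∫ u in (0:ℝ)..(π / 2), (1 - x * Real.sin u ^ 2) ^ (-(1/2 : ℝ))

/-!
Expanding `P_n(2x - 1)` in powers of `x - 1` turns each term of the moment into a Beta integral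
`B(μ, k + 1) = k! / (μ)ₖ₊₁`. The moment is then the terminating sum `μ⁻¹ ₂F₁(-n, n + 1; μ + 1; 1)`,
which Chu–Vandermonde evaluates to `(μ - n)ₙ / (μ)ₙ₊₁`, and `1/Γ(z) = (z)ₙ / Γ(z + n)` turns this
into the quotient of Gamma values.
-/

open Finset Polynomial

theorem ascPochhammer_succ_eval_eq_mul_eval_add_one {R : Type*} [CommSemiring R] (n : ℕ)
    (x : R) :
    (ascPochhammer R (n + 1)).eval x = x * (ascPochhammer R n).eval (x + 1) := by
  simp [ascPochhammer_succ_left, eval_comp]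

section ChuVandermonde

variable {K : Type*} [Field K]

/-- Chu–Vandermonde: `₂F₁(-n, b; c; 1) = (c - b)ₙ / (c)ₙ`. -/
theorem sum_choose_mul_neg_one_pow_mul_ascPochhammer_div (n : ℕ) (b c : K)
    (hc : (ascPochhammer K n).eval c ≠ 0) :
    ∑ k ∈ range (n + 1), n.choose k *
        ((-1) ^ k * (ascPochhammer K k).eval b / (ascPochhammer K k).eval c) =
      (ascPochhammer K n).eval (c - b) / (ascPochhammer K n).eval c := by
  induction n generalizing b c with
  | zero => simp
  | succ n ih =>
    obtain ⟨hcn, hc_add_n⟩ := mul_ne_zero_iff.mp (ascPochhammer_succ_eval n c ▸ hc)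
    obtain ⟨hc0, hc1⟩ := mul_ne_zero_iff.mp (ascPochhammer_succ_eval_eq_mul_eval_add_one n c ▸ hc)
    have hshift : ∀ k : ℕ, (-1) ^ (k + 1) * (ascPochhammer K (k + 1)).eval b /
        (ascPochhammer K (k + 1)).eval c =
        -(b / c) * ((-1) ^ k * (ascPochhammer K k).eval (b + 1) /
          (ascPochhammer K k).eval (c + 1)) := by
      intro k
      simp only [ascPochhammer_succ_eval_eq_mul_eval_add_one]
      field_simp
      ring
    have hden : (ascPochhammer K n).eval (c + 1) = (ascPochhammer K n).eval c * (c + n) / c := by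
      rw [eq_div_iff hc0, mul_comm, ← ascPochhammer_succ_eval_eq_mul_eval_add_one,
        ascPochhammer_succ_eval]
    rw [sum_choose_succ_mul (fun k _ => (-1) ^ k * (ascPochhammer K k).eval b /
      (ascPochhammer K k).eval c) n]
    simp only [hshift, mul_left_comm _ (-(b / c))]
    rw [← mul_sum, ih b c hcn, ih (b + 1) (c + 1) hc1, add_sub_add_right_eq_sub,
      ascPochhammer_succ_eval n (c - b), ascPochhammer_succ_eval n c, hden]
    field_simp
    ring

theorem sum_choose_mul_choose_add_mul_div_ascPochhammer (n : ℕ) (μ : K)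
    (hμ : (ascPochhammer K (n + 1)).eval μ ≠ 0) :
    ∑ k ∈ range (n + 1), n.choose k * (n + k).choose k *
        ((-1) ^ k * k.factorial / (ascPochhammer K (k + 1)).eval μ) =
      (ascPochhammer K n).eval (μ - n) / (ascPochhammer K (n + 1)).eval μ := by
  rw [ascPochhammer_succ_eval_eq_mul_eval_add_one] at hμ ⊢
  obtain ⟨hμ0, hμ1⟩ := mul_ne_zero_iff.mp hμ
  -- `(n + k).choose k * k! = (n + 1)ₖ`: this is Chu–Vandermonde with `b = n + 1`, `c = μ + 1`
  have hterm : ∀ k : ℕ, (n.choose k : K) * (n + k).choose k *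
      ((-1) ^ k * k.factorial / (ascPochhammer K (k + 1)).eval μ) =
      μ⁻¹ * (n.choose k * ((-1) ^ k * (ascPochhammer K k).eval ((n : K) + 1) /
        (ascPochhammer K k).eval (μ + 1))) := by
    intro k
    rw [ascPochhammer_succ_eval_eq_mul_eval_add_one, ← Nat.cast_succ, ← Nat.cast_ascFactorial,
      Nat.ascFactorial_eq_factorial_mul_choose]
    push_cast
    field_simp
  simp only [hterm, ← mul_sum]
  rw [sum_choose_mul_neg_one_pow_mul_ascPochhammer_div n _ _ hμ1, add_sub_add_right_eq_sub]
  field_simp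

end ChuVandermonde

namespace Complex

theorem ne_neg_natCast_of_re_pos {z : ℂ} (hz : 0 < z.re) (m : ℕ) : z ≠ -m := by
  rintro rfl
  simp only [neg_re, natCast_re, Left.neg_pos_iff] at hz
  exact m.cast_nonneg.not_gt hz

theorem ascPochhammer_eval_ne_zero_of_re_pos {z : ℂ} (hz : 0 < z.re) (n : ℕ) :
    (ascPochhammer ℂ n).eval z ≠ 0 := by
  rw [Ne, ascPochhammer_eval_eq_zero_iff]
  rintro ⟨k, -, hk⟩
  exact ne_neg_natCast_of_re_pos hz k (by rw [hk, neg_neg])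

/-- Since `Gamma` is `0` at its poles, this holds for every `z`: it is the identity for the
entire function `1 / Γ`. -/
theorem inv_Gamma_eq_ascPochhammer_eval_mul (z : ℂ) (n : ℕ) :
    (Gamma z)⁻¹ = (ascPochhammer ℂ n).eval z * (Gamma (z + n))⁻¹ := by
  by_cases hz : ∀ k : ℕ, z ≠ -k
  · have hzn : ∀ k : ℕ, z + n ≠ -k := fun k h => hz (k + n) (by push_cast; linear_combination h)
    rw [← Gamma_add_nat_div_Gamma_eq z hz, div_mul_eq_mul_div, mul_inv_cancel₀ (Gamma_ne_zero hzn),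
      one_div]
  · simp only [not_forall, not_not] at hz
    obtain ⟨m, rfl⟩ := hz
    rw [Gamma_neg_nat_eq_zero, inv_zero]
    rcases lt_or_ge m n with hmn | hnm
    · rw [ascPochhammer_eval_neg_coe_nat_of_lt hmn, zero_mul]
    · rw [show -(m : ℂ) + n = -((m - n : ℕ) : ℂ) by push_cast [Nat.cast_sub hnm]; ring,
        Gamma_neg_nat_eq_zero, inv_zero, mul_zero]

theorem Gamma_sq_div_Gamma_add_mul_Gamma_sub {μ : ℂ} (hμ : Gamma μ ≠ 0) (n : ℕ) :
    Gamma μ ^ 2 / (Gamma (μ + n + 1) * Gamma (μ - n)) =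
      (ascPochhammer ℂ n).eval (μ - n) / (ascPochhammer ℂ (n + 1)).eval μ := by
  have hsub := inv_Gamma_eq_ascPochhammer_eval_mul (μ - n) n
  have hadd := inv_Gamma_eq_ascPochhammer_eval_mul μ (n + 1)
  rw [sub_add_cancel] at hsub
  rw [Nat.cast_succ, ← add_assoc] at hadd
  have hratio : Gamma μ * (Gamma (μ + n + 1))⁻¹ = ((ascPochhammer ℂ (n + 1)).eval μ)⁻¹ :=
    eq_inv_of_mul_eq_one_left <| by
      rw [mul_assoc, mul_comm _ (eval _ _), ← hadd, mul_inv_cancel₀ hμ]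
  rw [div_eq_mul_inv, mul_inv, hsub, div_eq_mul_inv, ← hratio]
  field_simp

theorem betaIntegral_natCast_add_one {u : ℂ} (hu : 0 < u.re) (k : ℕ) :
    betaIntegral u (k + 1) = k.factorial / (ascPochhammer ℂ (k + 1)).eval u := by
  have hk : 0 < ((k : ℂ) + 1).re := by simp; positivity
  have hΓ := Gamma_mul_Gamma_eq_betaIntegral hu hk
  rw [Gamma_nat_eq_factorial] at hΓ
  rw [eq_div_iff (ascPochhammer_eval_ne_zero_of_re_pos hu _),
    ← Gamma_add_nat_div_Gamma_eq u (ne_neg_natCast_of_re_pos hu), mul_div_assoc',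
    div_eq_iff (Gamma_ne_zero_of_re_pos hu), Nat.cast_succ]
  linear_combination -hΓ

end Complex

theorem legendreP_two_mul_sub_one (n : ℕ) (x : ℝ) :
    (legendreP n (2 * x - 1) : ℂ) =
      ∑ k ∈ range (n + 1), (n.choose k * (n + k).choose k : ℂ) * ((x : ℂ) - 1) ^ k := by
  simp only [legendreP]
  push_cast
  congr! 2
  ring

theorem integral_cpow_mul_sub_one_pow {μ : ℂ} (hμ : 0 < μ.re) (k : ℕ) :
    ∫ x in (0 : ℝ)..1, (x : ℂ) ^ (μ - 1) * ((x : ℂ) - 1) ^ k =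
      (-1) ^ k * k.factorial / (ascPochhammer ℂ (k + 1)).eval μ := by
  rw [mul_div_assoc, ← Complex.betaIntegral_natCast_add_one hμ, Complex.betaIntegral,
    ← intervalIntegral.integral_const_mul]
  refine intervalIntegral.integral_congr fun x _ => ?_
  rw [add_sub_cancel_right, Complex.cpow_natCast, show (x : ℂ) - 1 = -(1 - x) by ring, neg_pow]
  ring

theorem moment_legendreP (μ : ℂ) (hμ : 0 < μ.re) (n : ℕ) :
    ∫ x in (0:ℝ)..1, (x : ℂ) ^ (μ - 1) * (legendreP n (2 * x - 1) : ℂ) =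
      Complex.Gamma μ ^ 2 / (Complex.Gamma (μ + n + 1) * Complex.Gamma (μ - n)) := by
  have hint : ∀ k : ℕ, IntervalIntegrable (fun x : ℝ => (x : ℂ) ^ (μ - 1) * ((x : ℂ) - 1) ^ k)
      MeasureTheory.volume 0 1 := fun k =>
    (intervalIntegral.intervalIntegrable_cpow' (by simpa using hμ)).mul_continuousOn
      (by fun_prop)
  calc ∫ x in (0:ℝ)..1, (x : ℂ) ^ (μ - 1) * (legendreP n (2 * x - 1) : ℂ)
      = ∑ k ∈ range (n + 1), (n.choose k * (n + k).choose k : ℂ) *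
          ∫ x in (0:ℝ)..1, (x : ℂ) ^ (μ - 1) * ((x : ℂ) - 1) ^ k := by
        simp_rw [legendreP_two_mul_sub_one, mul_sum, mul_left_comm ((_ : ℂ) ^ (μ - 1))]
        rw [intervalIntegral.integral_finsetSum fun k _ => (hint k).const_mul _]
        simp only [intervalIntegral.integral_const_mul]
    _ = (ascPochhammer ℂ n).eval (μ - n) / (ascPochhammer ℂ (n + 1)).eval μ := by
        simp only [integral_cpow_mul_sub_one_pow hμ]
        exact sum_choose_mul_choose_add_mul_div_ascPochhammer n μ
          (Complex.ascPochhammer_eval_ne_zero_of_re_pos hμ _)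
    _ = _ :=
        (Complex.Gamma_sq_div_Gamma_add_mul_Gamma_sub (Complex.Gamma_ne_zero_of_re_pos hμ) n).symm
end

section
/- For every complex ν (indeterminate forms interpreted as limits), √π / ( Γ((1−ν)/2) Γ((ν+2)/2) ) = Σ_{m≥0} C(2m,m) (−1)^m / 4^m · [ sin(π(2m−ν))/(π(2m−ν)) + sin(π(2m+ν+1))/(π(2m+ν+1)) ]. -/
open Complex Real

/-- sin(π z)/(π z), with the value 1 at z = 0. -/
noncomputable def csinc (z : ℂ) : ℂ :=
  if z = 0 then 1 else Complex.sin (π * z) / (π * z)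

open MeasureTheory Set Filter Topology

/-!
Both sides are entire in `ν`: the left one because `1 / Γ` is, the right one because its
coefficient `C(2m,m) (-1)^m / 4^m = Ring.choose (-1/2) m` is `O(m^(-1/2))` while the bracket is
`O(1/m)` locally uniformly. So it suffices to prove the identity on the strip `-1 < re ν < 0`.
There, with `u = -ν/2` and `v = (ν+1)/2`, so that `u + v = 1/2`, the bracket equals
`sin (2πu) / (2π) * (1/(m+u) + 1/(m+v))`. Integrating the binomial series
`(1+x)^(-1/2) = ∑ Ring.choose (-1/2) m * x^m` against `x^(u-1)` over `(0,1)` gives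
`∑ Ring.choose (-1/2) m / (m+u) = ∫₀¹ x^(u-1) (1+x)^(-1/2) dx`; the substitution
`x = s/(1-s)` turns this into the Beta integrand `s^(u-1) (1-s)^(v-1)` over `(0,1/2)`, and the
`v`-term gives the same integrand over `(1/2,1)` after `s ↦ 1 - s`. Hence the series is
`B(u,v)`, and the reflection formula for `Γ` identifies `sin (2πu) / (2π) * B(u,v)` with the
left-hand side.
-/

lemma Ring.choose_succ_eq_mul {K : Type*} [Field K] [CharZero K] (a : K) (m : ℕ) :
    Ring.choose a (m + 1) = Ring.choose a m * ((a - m) / (m + 1)) := by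
  have h := Ring.descPochhammer_eq_factorial_smul_choose a (m + 1)
  rw [descPochhammer_succ_right, Polynomial.smeval_mul,
    Ring.descPochhammer_eq_factorial_smul_choose] at h
  simp only [Polynomial.smeval_sub, Polynomial.smeval_X, Polynomial.smeval_natCast,
    nsmul_eq_mul, Nat.factorial_succ, Nat.cast_mul, Nat.cast_succ, npow_one, npow_zero,
    mul_one] at h
  rw [mul_div_assoc', eq_div_iff (Nat.cast_add_one_ne_zero m)]
  apply mul_left_cancel₀ (Nat.cast_ne_zero.mpr m.factorial_ne_zero)
  linear_combination -h

lemma Ring.choose_neg_one_half (m : ℕ) :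
    Ring.choose (-1 / 2 : ℂ) m = ((2 * m).choose m : ℂ) * (-1) ^ m / 4 ^ m := by
  induction m with
  | zero => simp
  | succ m ih =>
    have h := congrArg (Nat.cast : ℕ → ℂ) (Nat.succ_mul_centralBinom_succ m)
    simp only [Nat.centralBinom_eq_two_mul_choose] at h
    rw [Ring.choose_succ_eq_mul, ih, div_mul_div_comm,
      div_eq_div_iff (by simp [Nat.cast_add_one_ne_zero]) (by simp)]
    push_cast at h ⊢
    linear_combination ((-1 : ℂ) ^ m * 4 ^ m) * h

lemma norm_choose_neg_one_half_sq_le (m : ℕ) :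
    ‖Ring.choose (-1 / 2 : ℂ) m‖ ^ 2 ≤ 1 / (m + 1) := by
  induction m with
  | zero => simp
  | succ m ih =>
    have hr : ‖(-1 / 2 - m : ℂ) / (m + 1)‖ = (2 * m + 1) / (2 * m + 2) := by
      rw [show (-1 / 2 - m : ℂ) / (m + 1) = ((-((2 * m + 1) / (2 * m + 2)) : ℝ) : ℂ) by
        push_cast; field_simp; ring, Complex.norm_real, norm_neg,
        Real.norm_of_nonneg (by positivity)]
    rw [Ring.choose_succ_eq_mul, norm_mul, mul_pow, hr]
    push_cast
    calc ‖Ring.choose (-1 / 2 : ℂ) m‖ ^ 2 * ((2 * m + 1) / (2 * m + 2)) ^ 2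
        ≤ 1 / (m + 1) * ((2 * m + 1) / (2 * m + 2)) ^ 2 := by gcongr
      _ ≤ 1 / ((m : ℝ) + 1 + 1) := by
        rw [div_pow, div_mul_div_comm, div_le_div_iff₀ (by positivity) (by positivity)]
        nlinarith [(m.cast_nonneg : (0:ℝ) ≤ m)]

lemma summable_norm_choose_neg_one_half_div :
    Summable fun m : ℕ => ‖Ring.choose (-1 / 2 : ℂ) m‖ / (m + 1) := by
  have h : Summable fun m : ℕ => ((m + 1 : ℝ) ^ (3 / 2 : ℝ))⁻¹ := by
    simpa using (summable_nat_add_iff 1).mpr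
      (Real.summable_nat_rpow_inv.mpr (by norm_num : (1 : ℝ) < 3 / 2))
  refine h.of_nonneg_of_le (fun m => by positivity) fun m => ?_
  have hm : (0 : ℝ) < m + 1 := by positivity
  have hc : ‖Ring.choose (-1 / 2 : ℂ) m‖ ≤ ((m + 1 : ℝ) ^ (1 / 2 : ℝ))⁻¹ := by
    rw [← Real.sqrt_eq_rpow, ← Real.sqrt_inv, ← one_div]
    exact Real.le_sqrt_of_sq_le (norm_choose_neg_one_half_sq_le m)
  calc ‖Ring.choose (-1 / 2 : ℂ) m‖ / (m + 1)
      ≤ ((m + 1 : ℝ) ^ (1 / 2 : ℝ))⁻¹ / (m + 1) := by gcongr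
    _ = ((m + 1 : ℝ) ^ (3 / 2 : ℝ))⁻¹ := by
        rw [show (3 / 2 : ℝ) = 1 / 2 + 1 by norm_num, Real.rpow_add hm, Real.rpow_one,
          div_eq_mul_inv, mul_inv]

lemma summable_norm_choose_neg_one_half_div_add {a : ℝ} (ha : 0 < a) :
    Summable fun m : ℕ => ‖Ring.choose (-1 / 2 : ℂ) m‖ / (m + a) := by
  refine (summable_norm_choose_neg_one_half_div.div_const (min a 1)).of_nonneg_of_le
    (fun m => by positivity) fun m => ?_
  rw [div_div]
  gcongr
  nlinarith [min_le_left a 1, min_le_right a 1, (m.cast_nonneg : (0 : ℝ) ≤ m),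
    lt_min ha one_pos]

lemma Complex.hasSum_choose_mul_pow (a : ℂ) {x : ℂ} (hx : ‖x‖ < 1) :
    HasSum (fun m => Ring.choose a m * x ^ m) ((1 + x) ^ a) := by
  have h := Complex.one_add_cpow_hasFPowerSeriesOnBall_zero (a := a) |>.hasSum
    (y := x) (by
      simpa [Metric.eball, edist_zero_right, enorm_eq_nnnorm, ← NNReal.coe_lt_coe] using hx)
  simpa [binomialSeries, FormalMultilinearSeries.ofScalars] using h

lemma csinc_of_ne {z : ℂ} (hz : z ≠ 0) : csinc z = Complex.sin (π * z) / (π * z) := if_neg hz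

lemma csinc_eq_dslope : csinc = dslope (fun z => Complex.sin (π * z) / π) 0 := by
  have hπ : (π : ℂ) ≠ 0 := Complex.ofReal_ne_zero.mpr Real.pi_ne_zero
  have hd : HasDerivAt (fun z : ℂ => Complex.sin (π * z) / π) 1 0 := by
    simpa [hπ] using (((hasDerivAt_id (0 : ℂ)).const_mul (π : ℂ)).csin).div_const (π : ℂ)
  funext z
  rcases eq_or_ne z 0 with rfl | hz
  · rw [dslope_same, hd.deriv, csinc, if_pos rfl]
  · rw [dslope_of_ne _ hz, slope_def_field, csinc_of_ne hz]
    simp [div_div, mul_comm]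

lemma differentiable_csinc : Differentiable ℂ csinc := by
  rw [← differentiableOn_univ, csinc_eq_dslope, Complex.differentiableOn_dslope univ_mem]
  fun_prop

lemma csinc_add_csinc_of_add_eq_half (m : ℕ) {u v : ℂ} (huv : u + v = 1 / 2)
    (hu : (m : ℂ) + u ≠ 0) (hv : (m : ℂ) + v ≠ 0) :
    csinc (2 * (m + u)) + csinc (2 * (m + v)) =
      Complex.sin (2 * π * u) / (2 * π) * (1 / (m + u) + 1 / (m + v)) := by
  have hπ : (π : ℂ) ≠ 0 := Complex.ofReal_ne_zero.mpr Real.pi_ne_zero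
  have hsu : Complex.sin (π * (2 * (m + u))) = Complex.sin (2 * π * u) := by
    rw [show π * (2 * (m + u)) = 2 * π * u + (m : ℤ) * (2 * π) by push_cast; ring,
      Complex.sin_add_int_mul_two_pi]
  have hsv : Complex.sin (π * (2 * (m + v))) = Complex.sin (2 * π * u) := by
    rw [show π * (2 * (m + v)) = π - 2 * π * u + (m : ℤ) * (2 * π) by
      rw [← sub_eq_of_eq_add' huv.symm]; push_cast; ring,
      Complex.sin_add_int_mul_two_pi, Complex.sin_pi_sub]
  rw [csinc_of_ne (mul_ne_zero two_ne_zero hu), csinc_of_ne (mul_ne_zero two_ne_zero hv),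
    hsu, hsv]
  field_simp

lemma norm_csinc_add_csinc_le {m : ℕ} {ν : ℂ} (hm : ‖ν‖ + 1 ≤ m) :
    ‖csinc (2 * m - ν) + csinc (2 * m + ν + 1)‖ ≤
      2 * ‖Complex.sin (π * ν)‖ / (π * (m + 1)) := by
  have hre : |ν.re| ≤ ‖ν‖ := Complex.abs_re_le_norm ν
  have hu : (m + 1 : ℝ) / 2 ≤ ‖(m : ℂ) + -ν / 2‖ := by
    refine le_trans ?_ (Complex.re_le_norm _)
    simp only [Complex.add_re, Complex.natCast_re, Complex.neg_re, Complex.div_ofNat_re]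
    linarith [le_abs_self ν.re]
  have hv : (m + 1 : ℝ) / 2 ≤ ‖(m : ℂ) + (ν + 1) / 2‖ := by
    refine le_trans ?_ (Complex.re_le_norm _)
    simp only [Complex.add_re, Complex.natCast_re, Complex.one_re, Complex.div_ofNat_re]
    linarith [neg_abs_le ν.re]
  have hm1 : (0 : ℝ) < (m + 1) / 2 := by positivity
  rw [show 2 * (m : ℂ) - ν = 2 * (m + -ν / 2) by ring,
    show 2 * (m : ℂ) + ν + 1 = 2 * (m + (ν + 1) / 2) by ring,
    csinc_add_csinc_of_add_eq_half m (by ring) (norm_pos_iff.mp (hm1.trans_le hu))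
      (norm_pos_iff.mp (hm1.trans_le hv)),
    show 2 * π * (-ν / 2) = -(π * ν) by ring, Complex.sin_neg, norm_mul, norm_div, norm_neg]
  have hπ : ‖(2 * π : ℂ)‖ = 2 * π := by
    rw [show (2 * π : ℂ) = ((2 * π : ℝ) : ℂ) by push_cast; ring, Complex.norm_real,
      Real.norm_of_nonneg (by positivity)]
  have hsum : ‖1 / ((m : ℂ) + -ν / 2) + 1 / ((m : ℂ) + (ν + 1) / 2)‖ ≤ 4 / (m + 1) := by
    refine (norm_add_le _ _).trans ?_
    rw [norm_div, norm_div, norm_one]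
    calc 1 / ‖(m : ℂ) + -ν / 2‖ + 1 / ‖(m : ℂ) + (ν + 1) / 2‖
        ≤ 1 / ((m + 1) / 2) + 1 / ((m + 1) / 2) := by gcongr
      _ = 4 / (m + 1) := by field_simp; ring
  rw [hπ]
  calc ‖Complex.sin (π * ν)‖ / (2 * π) *
        ‖1 / ((m : ℂ) + -ν / 2) + 1 / ((m : ℂ) + (ν + 1) / 2)‖
      ≤ ‖Complex.sin (π * ν)‖ / (2 * π) * (4 / (m + 1)) := by gcongr
    _ = 2 * ‖Complex.sin (π * ν)‖ / (π * (m + 1)) := by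
      field_simp
      ring

lemma differentiable_tsum_choose_mul_csinc :
    Differentiable ℂ fun ν : ℂ => ∑' m : ℕ,
      Ring.choose (-1 / 2 : ℂ) m * (csinc (2 * m - ν) + csinc (2 * m + ν + 1)) := by
  intro ν₀
  set R := ‖ν₀‖ + 1
  obtain ⟨S, hS⟩ := (isCompact_closedBall (0 : ℂ) R).exists_bound_of_continuousOn
    (f := fun ν : ℂ => Complex.sin (π * ν)) (by fun_prop)
  have hbound : ∀ᶠ m : ℕ in cofinite, ∀ ν ∈ Metric.ball (0 : ℂ) R,
      ‖Ring.choose (-1 / 2 : ℂ) m * (csinc (2 * m - ν) + csinc (2 * m + ν + 1))‖ ≤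
        ‖Ring.choose (-1 / 2 : ℂ) m‖ / (m + 1) * (2 * S / π) := by
    rw [Nat.cofinite_eq_atTop]
    filter_upwards [eventually_ge_atTop ⌈R + 1⌉₊] with m hm ν hν
    have hν : ‖ν‖ < R := mem_ball_zero_iff.mp hν
    have hmR : ‖ν‖ + 1 ≤ m := by linarith [Nat.ceil_le.mp hm]
    rw [norm_mul]
    calc ‖Ring.choose (-1 / 2 : ℂ) m‖ * ‖csinc (2 * m - ν) + csinc (2 * m + ν + 1)‖
        ≤ ‖Ring.choose (-1 / 2 : ℂ) m‖ * (2 * S / (π * (m + 1))) := by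
          gcongr
          refine (norm_csinc_add_csinc_le hmR).trans ?_
          gcongr
          exact hS ν (Metric.ball_subset_closedBall (mem_ball_zero_iff.mpr hν))
      _ = ‖Ring.choose (-1 / 2 : ℂ) m‖ / (m + 1) * (2 * S / π) := by
          field_simp
  have hdiff := (tendstoUniformlyOn_tsum_of_cofinite_eventually
    (summable_norm_choose_neg_one_half_div.mul_right _) hbound).tendstoLocallyUniformlyOn
    |>.differentiableOn (Eventually.of_forall fun s => ?_) Metric.isOpen_ball
  · exact hdiff.differentiableAt (Metric.isOpen_ball.mem_nhds (by simp [R]))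
  · have := differentiable_csinc
    fun_prop

lemma Complex.ofReal_cpow_eq_exp {x : ℝ} (hx : 0 < x) (w : ℂ) :
    (x : ℂ) ^ w = Complex.exp (Real.log x * w) := by
  rw [Complex.cpow_def_of_ne_zero (Complex.ofReal_ne_zero.mpr hx.ne'), Complex.ofReal_log hx.le]

lemma image_div_one_sub_Ioo : (fun s : ℝ => s / (1 - s)) '' Ioo 0 (1 / 2) = Ioo 0 1 := by
  ext x
  constructor
  · rintro ⟨s, ⟨hs0, hs1⟩, rfl⟩
    exact ⟨div_pos hs0 (by linarith), (div_lt_one (by linarith)).mpr (by linarith)⟩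
  · rintro ⟨hx0, hx1⟩
    refine ⟨x / (1 + x), ⟨div_pos hx0 (by linarith), ?_⟩, ?_⟩
    · rw [div_lt_iff₀ (by linarith)]
      linarith
    · field_simp
      ring

lemma integral_Ioo_cpow_mul_one_add_cpow (u v : ℂ) :
    ∫ x in Ioo (0 : ℝ) 1, (x : ℂ) ^ (u - 1) * (1 + (x : ℂ)) ^ (-(u + v)) =
      ∫ s in (0 : ℝ)..1 / 2, (s : ℂ) ^ (u - 1) * (1 - (s : ℂ)) ^ (v - 1) := by
  have hderiv : ∀ s ∈ Ioo (0 : ℝ) (1 / 2),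
      HasDerivWithinAt (fun s : ℝ => s / (1 - s)) (1 / (1 - s) ^ 2) (Ioo 0 (1 / 2)) s := by
    intro s hs
    have h1s : 1 - s ≠ 0 := by linarith [hs.2]
    refine (((hasDerivAt_id s).div ((hasDerivAt_const s 1).sub (hasDerivAt_id s)) h1s)
      |>.hasDerivWithinAt).congr_deriv ?_
    simp only [Pi.sub_apply, id]
    field_simp
    ring
  have hinj : InjOn (fun s : ℝ => s / (1 - s)) (Ioo 0 (1 / 2)) := by
    intro s hs t ht hst
    have h1s : 1 - s ≠ 0 := by linarith [hs.2]
    have h1t : 1 - t ≠ 0 := by linarith [ht.2]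
    field_simp at hst
    linarith
  rw [← image_div_one_sub_Ioo, integral_image_eq_integral_abs_deriv_smul measurableSet_Ioo
    hderiv hinj, intervalIntegral.integral_of_le (by norm_num), integral_Ioc_eq_integral_Ioo]
  refine setIntegral_congr_fun measurableSet_Ioo fun s ⟨hs0, hs1⟩ => ?_
  have h1s : 0 < 1 - s := by linarith
  have hplus : 1 + ((s / (1 - s) : ℝ) : ℂ) = (((1 - s)⁻¹ : ℝ) : ℂ) := by
    have h1s' : (1 : ℂ) - s ≠ 0 := by exact_mod_cast h1s.ne'
    push_cast
    field_simp
    ring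
  have hjac : ((|1 / (1 - s) ^ 2| : ℝ) : ℂ) = ((1 - s : ℝ) : ℂ) ^ (-2 : ℂ) := by
    rw [abs_of_pos (by positivity), Complex.cpow_neg, show (2 : ℂ) = (2 : ℕ) by norm_num,
      Complex.cpow_natCast]
    push_cast
    ring
  simp only [Complex.real_smul]
  rw [hplus, hjac, show (1 : ℂ) - s = ((1 - s : ℝ) : ℂ) by push_cast; ring,
    Complex.ofReal_cpow_eq_exp h1s, Complex.ofReal_cpow_eq_exp (div_pos hs0 h1s),
    Complex.ofReal_cpow_eq_exp (inv_pos.mpr h1s), Complex.ofReal_cpow_eq_exp hs0,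
    Complex.ofReal_cpow_eq_exp h1s, Real.log_div hs0.ne' h1s.ne', Real.log_inv,
    ← Complex.exp_add, ← Complex.exp_add, ← Complex.exp_add]
  congr 1
  push_cast
  ring

lemma betaIntegral_eq_integral_add_integral {u v : ℂ} (hu : 0 < u.re) (hv : 0 < v.re) :
    Complex.betaIntegral u v =
      (∫ s in (0 : ℝ)..1 / 2, (s : ℂ) ^ (u - 1) * (1 - (s : ℂ)) ^ (v - 1)) +
        ∫ s in (0 : ℝ)..1 / 2, (s : ℂ) ^ (v - 1) * (1 - (s : ℂ)) ^ (u - 1) := by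
  have hint := Complex.betaIntegral_convergent hu hv
  rw [Complex.betaIntegral, ← intervalIntegral.integral_add_adjacent_intervals (b := 1 / 2)
    (hint.mono_set (uIcc_subset_uIcc (by simp) (by norm_num [uIcc_of_le])))
    (hint.mono_set (uIcc_subset_uIcc (by norm_num [uIcc_of_le]) (by simp)))]
  congr 1
  have h := intervalIntegral.integral_comp_sub_left
    (fun s : ℝ => (s : ℂ) ^ (u - 1) * (1 - (s : ℂ)) ^ (v - 1)) (a := 0) (b := 1 / 2) 1
  norm_num at h
  rw [← h]
  congr 1
  ext s
  ring_nf

lemma integral_Ioo_cpow_sub_one {w : ℂ} (hw : 0 < w.re) :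
    ∫ x in Ioo (0 : ℝ) 1, (x : ℂ) ^ (w - 1) = 1 / w := by
  rw [← integral_Ioc_eq_integral_Ioo, ← intervalIntegral.integral_of_le zero_le_one,
    integral_cpow (Or.inl (by simpa using hw)), sub_add_cancel]
  simp [Complex.zero_cpow (by rintro rfl; simp at hw : w ≠ 0)]

lemma integral_Ioo_norm_cpow_sub_one {w : ℂ} (hw : 0 < w.re) :
    ∫ x in Ioo (0 : ℝ) 1, ‖(x : ℂ) ^ (w - 1)‖ = 1 / w.re := by
  rw [setIntegral_congr_fun measurableSet_Ioo fun x hx =>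
      Complex.norm_cpow_eq_rpow_re_of_pos hx.1 (w - 1),
    ← integral_Ioc_eq_integral_Ioo, ← intervalIntegral.integral_of_le zero_le_one,
    integral_rpow (Or.inl (by simpa using hw))]
  simp [Real.zero_rpow hw.ne']

lemma tsum_choose_neg_one_half_div_add {u : ℂ} (hu : 0 < u.re) :
    ∑' m : ℕ, Ring.choose (-1 / 2 : ℂ) m / (m + u) =
      ∫ x in Ioo (0 : ℝ) 1, (x : ℂ) ^ (u - 1) * (1 + (x : ℂ)) ^ (-1 / 2 : ℂ) := by
  have hre : ∀ m : ℕ, 0 < ((m : ℂ) + u).re := fun m => by simp; positivity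
  have hintegrable : ∀ m : ℕ,
      IntegrableOn (fun x : ℝ => (x : ℂ) ^ ((m + u) - 1)) (Ioo 0 1) :=
    fun m => (intervalIntegral.intervalIntegrable_cpow' (by simpa using hre m)).1.mono_set
      Ioo_subset_Ioc_self
  calc ∑' m : ℕ, Ring.choose (-1 / 2 : ℂ) m / (m + u)
      = ∑' m : ℕ, ∫ x in Ioo (0 : ℝ) 1,
          Ring.choose (-1 / 2 : ℂ) m * (x : ℂ) ^ ((m + u) - 1) := by
        simp_rw [integral_const_mul, integral_Ioo_cpow_sub_one (hre _), mul_one_div]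
    _ = ∫ x in Ioo (0 : ℝ) 1,
          ∑' m : ℕ, Ring.choose (-1 / 2 : ℂ) m * (x : ℂ) ^ ((m + u) - 1) := by
        refine integral_tsum_of_summable_integral_norm (fun m => (hintegrable m).const_mul _) ?_
        simp_rw [norm_mul, integral_const_mul, integral_Ioo_norm_cpow_sub_one (hre _),
          mul_one_div]
        simpa using summable_norm_choose_neg_one_half_div_add hu
    _ = _ := by
        refine setIntegral_congr_fun measurableSet_Ioo fun x ⟨hx0, hx1⟩ => ?_
        have hx : (x : ℂ) ≠ 0 := Complex.ofReal_ne_zero.mpr hx0.ne'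
        have hsum := (Complex.hasSum_choose_mul_pow (-1 / 2) (x := x)
          (by simpa [abs_of_pos hx0] using hx1)).mul_right ((x : ℂ) ^ (u - 1))
        rw [mul_comm, ← hsum.tsum_eq]
        congr 1
        ext m
        rw [add_sub_assoc, Complex.cpow_add _ _ hx, Complex.cpow_natCast]
        ring

lemma tsum_choose_neg_one_half_mul_eq_betaIntegral {u v : ℂ} (hu : 0 < u.re) (hv : 0 < v.re)
    (huv : u + v = 1 / 2) :
    ∑' m : ℕ, Ring.choose (-1 / 2 : ℂ) m * (1 / (m + u) + 1 / (m + v)) =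
      Complex.betaIntegral u v := by
  have hsummable : ∀ {w : ℂ}, 0 < w.re →
      Summable fun m : ℕ => Ring.choose (-1 / 2 : ℂ) m / (m + w) :=
    fun {w} hw => (summable_norm_choose_neg_one_half_div_add hw).of_norm_bounded fun m => by
      rw [norm_div]
      gcongr
      simpa using Complex.re_le_norm ((m : ℂ) + w)
  simp_rw [mul_add, mul_one_div]
  rw [Summable.tsum_add (hsummable hu) (hsummable hv), tsum_choose_neg_one_half_div_add hu,
    tsum_choose_neg_one_half_div_add hv, betaIntegral_eq_integral_add_integral hu hv,
    ← integral_Ioo_cpow_mul_one_add_cpow u v, ← integral_Ioo_cpow_mul_one_add_cpow v u, huv,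
    add_comm v u, huv]
  norm_num

lemma Complex.Gamma_mul_Gamma_one_sub_mul_sin {z : ℂ} (h0 : 0 < z.re) (h1 : z.re < 1) :
    Complex.Gamma z * Complex.Gamma (1 - z) * Complex.sin (π * z) = π := by
  have h := Complex.Gamma_mul_Gamma_one_sub z
  have hΓ := mul_ne_zero (Complex.Gamma_ne_zero_of_re_pos h0)
    (Complex.Gamma_ne_zero_of_re_pos (show 0 < (1 - z).re by simpa using h1))
  rw [h, div_mul_cancel₀]
  rintro hs
  rw [hs, div_zero] at h
  exact hΓ h

lemma sin_mul_betaIntegral_eq {u : ℂ} (hu : 0 < u.re) (hu' : 0 < (1 / 2 - u).re) :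
    Complex.sin (2 * π * u) / (2 * π) * Complex.betaIntegral u (1 / 2 - u) =
      (Real.sqrt π : ℂ) / (Complex.Gamma (u + 1 / 2) * Complex.Gamma (1 - u)) := by
  have hre : u.re < 1 / 2 := by simpa using hu'
  have hπ : (π : ℂ) ≠ 0 := Complex.ofReal_ne_zero.mpr Real.pi_ne_zero
  have hsqrt : (Real.sqrt π : ℂ) ≠ 0 :=
    Complex.ofReal_ne_zero.mpr (Real.sqrt_pos.mpr Real.pi_pos).ne'
  have hΓhalf : Complex.Gamma (1 / 2) = Real.sqrt π := by
    rw [Complex.Gamma_one_half_eq, Real.sqrt_eq_rpow, Complex.ofReal_cpow Real.pi_nonneg]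
    norm_num
  have hΓ₁ := Complex.Gamma_mul_Gamma_one_sub_mul_sin hu (by linarith)
  have hΓ₂ := Complex.Gamma_mul_Gamma_one_sub_mul_sin hu' (by simp; linarith)
  rw [show 1 - (1 / 2 - u) = u + 1 / 2 by ring, show π * (1 / 2 - u) = π / 2 - π * u by ring,
    Complex.sin_pi_div_two_sub] at hΓ₂
  have hΓ₃ : Complex.Gamma (u + 1 / 2) ≠ 0 :=
    Complex.Gamma_ne_zero_of_re_pos (by simp; linarith)
  have hΓ₄ : Complex.Gamma (1 - u) ≠ 0 := Complex.Gamma_ne_zero_of_re_pos (by simp; linarith)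
  rw [Complex.betaIntegral_eq_Gamma_mul_div _ _ hu hu', add_sub_cancel, hΓhalf,
    show 2 * π * u = 2 * (π * u) by ring, Complex.sin_two_mul,
    eq_div_iff (mul_ne_zero hΓ₃ hΓ₄)]
  calc 2 * Complex.sin (π * u) * Complex.cos (π * u) / (2 * π) *
        (Complex.Gamma u * Complex.Gamma (1 / 2 - u) / (Real.sqrt π : ℂ)) *
        (Complex.Gamma (u + 1 / 2) * Complex.Gamma (1 - u))
      = (Complex.Gamma u * Complex.Gamma (1 - u) * Complex.sin (π * u)) *
          (Complex.Gamma (1 / 2 - u) * Complex.Gamma (u + 1 / 2) * Complex.cos (π * u)) /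
          (π * Real.sqrt π) := by
        field_simp
    _ = Real.sqrt π := by
        rw [hΓ₁, hΓ₂]
        field_simp
        rw [← Complex.ofReal_pow, Real.sq_sqrt Real.pi_nonneg]

lemma tsum_choose_mul_csinc_of_mem_strip {ν : ℂ} (h1 : -1 < ν.re) (h2 : ν.re < 0) :
    ∑' m : ℕ, Ring.choose (-1 / 2 : ℂ) m * (csinc (2 * m - ν) + csinc (2 * m + ν + 1)) =
      (Real.sqrt π : ℂ) / (Complex.Gamma ((1 - ν) / 2) * Complex.Gamma ((ν + 2) / 2)) := by
  set u := -ν / 2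
  have hu : 0 < u.re := by simp [u]; linarith
  have hu' : 0 < (1 / 2 - u).re := by simp [u]; linarith
  have hterm : ∀ m : ℕ, csinc (2 * m - ν) + csinc (2 * m + ν + 1) =
      Complex.sin (2 * π * u) / (2 * π) * (1 / (m + u) + 1 / (m + (1 / 2 - u))) := by
    intro m
    have hpos : ∀ w : ℂ, 0 < w.re → (m : ℂ) + w ≠ 0 := fun w hw h => by
      simpa [h] using (show 0 < ((m : ℂ) + w).re by simp; positivity)
    rw [show 2 * (m : ℂ) - ν = 2 * (m + u) by ring,
      show 2 * (m : ℂ) + ν + 1 = 2 * (m + (1 / 2 - u)) by ring]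
    exact csinc_add_csinc_of_add_eq_half m (by ring) (hpos u hu) (hpos _ hu')
  simp_rw [hterm, mul_left_comm _ (Complex.sin (2 * π * u) / (2 * π))]
  rw [tsum_mul_left, tsum_choose_neg_one_half_mul_eq_betaIntegral hu hu' (by ring),
    sin_mul_betaIntegral_eq hu hu']
  congr 3 <;> ring

theorem dougall_at_half (ν : ℂ) :
    (Real.sqrt π : ℂ) / (Complex.Gamma ((1 - ν) / 2) * Complex.Gamma ((ν + 2) / 2)) =
      ∑' m : ℕ, ((2 * m).choose m : ℂ) * (-1) ^ m / 4 ^ m *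
        (csinc (2 * (m : ℂ) - ν) + csinc (2 * (m : ℂ) + ν + 1)) := by
  simp_rw [← Ring.choose_neg_one_half]
  have hL : Differentiable ℂ fun ν : ℂ =>
      (Real.sqrt π : ℂ) / (Complex.Gamma ((1 - ν) / 2) * Complex.Gamma ((ν + 2) / 2)) := by
    simp_rw [div_eq_mul_inv, mul_inv]
    exact (differentiable_const _).mul
      ((Complex.differentiable_one_div_Gamma.comp (by fun_prop)).mul
        (Complex.differentiable_one_div_Gamma.comp (by fun_prop)))
  have hstrip : {ν : ℂ | -1 < ν.re ∧ ν.re < 0} ∈ 𝓝 (-1 / 2 : ℂ) :=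
    (isOpen_Ioo.preimage Complex.continuous_re).mem_nhds (by norm_num)
  have h := AnalyticOnNhd.eq_of_eventuallyEq (fun z _ => hL.analyticAt z)
    (fun z _ => differentiable_tsum_choose_mul_csinc.analyticAt z)
    (eventually_of_mem hstrip fun ν hν => (tsum_choose_mul_csinc_of_mem_strip hν.1 hν.2).symm)
  exact congrFun h ν
end
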